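/- arXiv:2204.07329 — 3 statements merged into one kernel-verified Lean document; each statement's English description precedes it below -/
import Mathlib

section
/- Let ε ∈ (0,1), Σ ∈ ℝ^{n×n} positive semidefinite, A ∈ ℝ^{m×n}, b ∈ ℝ^m, and c ∈ ℝ, and set L(ξ) = ‖Aξ + b‖² + c. Then sup_{P ∈ M(Σ)} CVaR_ε^P[L(ξ)] ≥ c + ‖b‖² + (1/ε)·Tr(Σ Aᵀ A). -/
/-!
Put mass `1 - ε` at the origin and the remaining mass `ε` on a finitely supported zero-mean law
`ν` with covariance `Σ / ε` (symmetric atoms built from a rank-one decomposition of `Σ`). The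
mixture `P` lies in `M(Σ)`, and since `ε • ν ≤ P`, for every `β`
`β + ε⁻¹ E_P[(L - β)⁺] ≥ β + E_ν[(L - β)⁺] ≥ E_ν[L] = c + ‖b‖² + Tr(Σ AᵀA) / ε`.
-/

open MeasureTheory Matrix Kronecker

/-- Spectral norm (largest singular value) of a real matrix, as the operator norm of the
induced map between Euclidean spaces. -/
noncomputable def specNorm {m n : Type*} [Fintype m] [Fintype n] [DecidableEq n]
    (A : Matrix m n ℝ) : ℝ :=
  ‖LinearMap.toContinuousLinearMap (Matrix.toEuclideanLin A)‖

/-- Conditional value-at-risk at level `ε` of the loss `L` under the measure `P`: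
`CVaR_ε^P[L] = inf_β ( β + (1/ε) E_P[max (L ξ - β) 0] )`. -/
noncomputable def CVaR {ι : Type*} [Fintype ι] (ε : ℝ)
    (P : Measure (EuclideanSpace ℝ ι)) (L : EuclideanSpace ℝ ι → ℝ) : ℝ :=
  ⨅ β : ℝ, (β + ε⁻¹ * ∫ ξ, max (L ξ - β) 0 ∂P)

/-- The set `M(S)` of Borel probability measures with zero mean and covariance `S`. -/
def MomentSet {ι : Type*} [Fintype ι] (S : Matrix ι ι ℝ) :
    Set (Measure (EuclideanSpace ℝ ι)) :=
  {P | IsProbabilityMeasure P ∧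
       (∀ i, Integrable (fun ξ => ξ i) P) ∧
       (∀ i, ∫ ξ, ξ i ∂P = 0) ∧
       (∀ i j, Integrable (fun ξ => ξ i * ξ j) P) ∧
       (∀ i j, ∫ ξ, ξ i * ξ j ∂P = S i j)}

/-- Worst-case CVaR over the moment set `M(S)`. -/
noncomputable def wcCVaR {ι : Type*} [Fintype ι] (ε : ℝ) (S : Matrix ι ι ℝ)
    (L : EuclideanSpace ℝ ι → ℝ) : ℝ :=
  ⨆ P : MomentSet S, CVaR ε (P : Measure (EuclideanSpace ℝ ι)) L

open scoped ENNReal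

section UniformAtoms

variable {Ω E : Type*} [Fintype Ω] [MeasurableSpace E]

noncomputable def uniformAtoms (x : Ω → E) : Measure E :=
  (Fintype.card Ω : ℝ≥0∞)⁻¹ • ∑ ω, Measure.dirac (x ω)

lemma isProbabilityMeasure_uniformAtoms [Nonempty Ω] (x : Ω → E) :
    IsProbabilityMeasure (uniformAtoms x) :=
  ⟨by simp [uniformAtoms, ENNReal.inv_mul_cancel]⟩

variable [MeasurableSingletonClass E]

lemma integrable_uniformAtoms [Nonempty Ω] (x : Ω → E) (f : E → ℝ) :
    Integrable f (uniformAtoms x) :=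
  (integrable_finsetSum_measure.2 fun _ _ => integrable_dirac enorm_lt_top).smul_measure
    (by simp)

lemma integral_uniformAtoms (x : Ω → E) (f : E → ℝ) :
    ∫ y, f y ∂uniformAtoms x = (Fintype.card Ω : ℝ)⁻¹ * ∑ ω, f (x ω) := by
  rw [uniformAtoms, integral_smul_measure,
    integral_finsetSum_measure fun _ _ => integrable_dirac enorm_lt_top]
  simp

end UniformAtoms

section Moments

variable {ι κ : Type*} [Fintype ι] [Fintype κ] {S : Matrix ι ι ℝ}
  {Q : Measure (EuclideanSpace ℝ ι)}

lemma integrable_quadForm_of_mem_momentSet (hQ : Q ∈ MomentSet S) (M : ι → ι → ℝ) :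
    Integrable (fun ξ => ∑ j, ∑ k, M j k * (ξ j * ξ k)) Q :=
  integrable_finsetSum _ fun j _ => integrable_finsetSum _ fun k _ =>
    (hQ.2.2.2.1 j k).const_mul _

lemma integral_quadForm_of_mem_momentSet (hQ : Q ∈ MomentSet S) (M : ι → ι → ℝ) :
    ∫ ξ, ∑ j, ∑ k, M j k * (ξ j * ξ k) ∂Q = ∑ j, ∑ k, M j k * S j k := by
  refine (integral_finsetSum _ fun j _ => integrable_finsetSum _ fun k _ =>
    (hQ.2.2.2.1 j k).const_mul _).trans (Finset.sum_congr rfl fun j _ => ?_)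
  refine (integral_finsetSum _ fun k _ => (hQ.2.2.2.1 j k).const_mul _).trans
    (Finset.sum_congr rfl fun k _ => ?_)
  rw [integral_const_mul, hQ.2.2.2.2]

lemma integrable_linForm_of_mem_momentSet (hQ : Q ∈ MomentSet S) (v : ι → ℝ) :
    Integrable (fun ξ => ∑ j, v j * ξ j) Q :=
  integrable_finsetSum _ fun j _ => (hQ.2.1 j).const_mul _

lemma integral_linForm_of_mem_momentSet (hQ : Q ∈ MomentSet S) (v : ι → ℝ) :
    ∫ ξ, ∑ j, v j * ξ j ∂Q = 0 := by
  rw [integral_finsetSum _ fun j _ => (hQ.2.1 j).const_mul _]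
  simp [integral_const_mul, hQ.2.2.1]

lemma sq_sum_mul_add (a x : ι → ℝ) (β : ℝ) :
    (∑ j, a j * x j + β) ^ 2 =
      ∑ j, ∑ k, (a j * a k) * (x j * x k) + (∑ j, (2 * β * a j) * x j + β ^ 2) := by
  have hsq : (∑ j, a j * x j) ^ 2 = ∑ j, ∑ k, (a j * a k) * (x j * x k) := by
    rw [sq, Finset.sum_mul_sum]
    exact Finset.sum_congr rfl fun j _ => Finset.sum_congr rfl fun k _ => by ring
  have hlin : 2 * (∑ j, a j * x j) * β = ∑ j, (2 * β * a j) * x j := by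
    rw [Finset.mul_sum, Finset.sum_mul]
    exact Finset.sum_congr rfl fun j _ => by ring
  rw [add_sq, hsq, hlin]
  ring

lemma integrable_sq_affine_of_mem_momentSet (hQ : Q ∈ MomentSet S) (a : ι → ℝ) (β : ℝ) :
    Integrable (fun ξ => (∑ j, a j * ξ j + β) ^ 2) Q := by
  have : IsProbabilityMeasure Q := hQ.1
  simp_rw [sq_sum_mul_add]
  exact (integrable_quadForm_of_mem_momentSet hQ _).add
    ((integrable_linForm_of_mem_momentSet hQ _).add (integrable_const _))

lemma integral_sq_affine_of_mem_momentSet (hQ : Q ∈ MomentSet S) (a : ι → ℝ) (β : ℝ) :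
    ∫ ξ, (∑ j, a j * ξ j + β) ^ 2 ∂Q = a ⬝ᵥ S *ᵥ a + β ^ 2 := by
  have : IsProbabilityMeasure Q := hQ.1
  simp_rw [sq_sum_mul_add]
  refine (integral_add (integrable_quadForm_of_mem_momentSet hQ _)
      ((integrable_linForm_of_mem_momentSet hQ _).add (integrable_const _))).trans ?_
  refine congrArg₂ (· + ·) ?_
    ((integral_add (integrable_linForm_of_mem_momentSet hQ _) (integrable_const _)).trans ?_)
  · rw [integral_quadForm_of_mem_momentSet hQ]
    simp only [dotProduct, mulVec, Finset.mul_sum]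
    exact Finset.sum_congr rfl fun j _ => Finset.sum_congr rfl fun k _ => by ring
  · simp [integral_linForm_of_mem_momentSet hQ]

lemma norm_sq_toEuclideanLin_add [DecidableEq ι] (A : Matrix κ ι ℝ) (b : EuclideanSpace ℝ κ)
    (ξ : EuclideanSpace ℝ ι) :
    ‖Matrix.toEuclideanLin A ξ + b‖ ^ 2 = ∑ r, (∑ j, A r j * ξ j + b r) ^ 2 := by
  rw [EuclideanSpace.real_norm_sq_eq]
  rfl

lemma integrable_norm_sq_affine_of_mem_momentSet [DecidableEq ι] (hQ : Q ∈ MomentSet S)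
    (A : Matrix κ ι ℝ) (b : EuclideanSpace ℝ κ) :
    Integrable (fun ξ => ‖Matrix.toEuclideanLin A ξ + b‖ ^ 2) Q := by
  simp_rw [norm_sq_toEuclideanLin_add]
  exact integrable_finsetSum _ fun r _ => integrable_sq_affine_of_mem_momentSet hQ _ _

lemma integral_norm_sq_affine_of_mem_momentSet [DecidableEq ι] (hQ : Q ∈ MomentSet S)
    (A : Matrix κ ι ℝ) (b : EuclideanSpace ℝ κ) :
    ∫ ξ, ‖Matrix.toEuclideanLin A ξ + b‖ ^ 2 ∂Q = trace (S * Aᵀ * A) + ‖b‖ ^ 2 := by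
  simp_rw [norm_sq_toEuclideanLin_add]
  refine (integral_finsetSum _ fun r _ => integrable_sq_affine_of_mem_momentSet hQ _ _).trans ?_
  simp_rw [integral_sq_affine_of_mem_momentSet hQ]
  rw [Finset.sum_add_distrib, EuclideanSpace.real_norm_sq_eq, trace_mul_cycle]
  congr 1
  simp only [trace, diag, mul_apply, dotProduct, mulVec, Finset.mul_sum, Finset.sum_mul]
  refine Finset.sum_congr rfl fun r _ => ?_
  rw [Finset.sum_comm]
  simp only [transpose_apply, mul_assoc]

end Moments

section Covariance

variable {ι : Type*} [Fintype ι]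

-- Each of the `2 |Λ|` atoms has mass `1 / (2 |Λ|)`, so the scaling `√|Λ|` makes the pair
-- `±√|Λ| v l` contribute exactly `v l (v l)ᵀ` to the covariance.
lemma signedAtoms_mem_momentSet {Λ : Type*} [Fintype Λ] [Nonempty Λ] (v : Λ → ι → ℝ) :
    uniformAtoms (fun ω : Λ × Bool =>
        WithLp.toLp 2 ((if ω.2 then √(Fintype.card Λ) else -√(Fintype.card Λ)) • v ω.1))
      ∈ MomentSet (∑ l, vecMulVec (v l) (v l)) := by
  refine ⟨isProbabilityMeasure_uniformAtoms _, fun _ => integrable_uniformAtoms _ _,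
    fun i => ?_, fun _ _ => integrable_uniformAtoms _ _, fun i j => ?_⟩
  · simp [integral_uniformAtoms, Fintype.sum_prod_type]
  · simp only [integral_uniformAtoms, Fintype.sum_prod_type, Fintype.sum_bool,
      Fintype.card_prod, Fintype.card_bool, Matrix.sum_apply, vecMulVec_apply, Finset.mul_sum]
    refine Finset.sum_congr rfl fun l _ => ?_
    simp only [if_true, Bool.false_eq_true, if_false, Pi.smul_apply, smul_eq_mul]
    push_cast
    field_simp
    rw [Real.sq_sqrt (Nat.cast_nonneg _)]
    ring

lemma exists_mem_momentSet {T : Matrix ι ι ℝ} (hT : T.PosSemidef) :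
    ∃ ν, ν ∈ MomentSet T := by
  obtain ⟨p, v, rfl⟩ := Matrix.posSemidef_iff_eq_sum_vecMulVec.mp hT
  -- an extra zero vector keeps the index type nonempty when `p = 0`
  have := signedAtoms_mem_momentSet fun o : Option (Fin p) => o.elim 0 v
  simp only [Fintype.sum_option, Option.elim_none, Option.elim_some, vecMulVec_zero,
    zero_add] at this
  exact ⟨_, this⟩

lemma integral_dirac_zero_mix {ν : Measure (EuclideanSpace ℝ ι)} {ε : ℝ} (hε0 : 0 ≤ ε)
    (hε1 : ε ≤ 1) {f : EuclideanSpace ℝ ι → ℝ} (hf : Integrable f ν) :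
    ∫ ξ, f ξ ∂(ENNReal.ofReal (1 - ε) • Measure.dirac 0 + ENNReal.ofReal ε • ν) =
      (1 - ε) * f 0 + ε * ∫ ξ, f ξ ∂ν := by
  rw [integral_add_measure ((integrable_dirac enorm_lt_top).smul_measure ENNReal.ofReal_ne_top)
      (hf.smul_measure ENNReal.ofReal_ne_top), integral_smul_measure, integral_smul_measure,
    integral_dirac, ENNReal.toReal_ofReal (sub_nonneg.2 hε1), ENNReal.toReal_ofReal hε0]
  simp

lemma dirac_zero_mix_mem_momentSet {T : Matrix ι ι ℝ} {ν : Measure (EuclideanSpace ℝ ι)}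
    (hν : ν ∈ MomentSet T) {ε : ℝ} (hε0 : 0 ≤ ε) (hε1 : ε ≤ 1) :
    ENNReal.ofReal (1 - ε) • Measure.dirac 0 + ENNReal.ofReal ε • ν ∈ MomentSet (ε • T) := by
  obtain ⟨hprob, hint₁, hmean, hint₂, hcov⟩ := hν
  have hint {f : EuclideanSpace ℝ ι → ℝ} (hf : Integrable f ν) :
      Integrable f (ENNReal.ofReal (1 - ε) • Measure.dirac 0 + ENNReal.ofReal ε • ν) :=
    ((integrable_dirac enorm_lt_top).smul_measure ENNReal.ofReal_ne_top).add_measure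
      (hf.smul_measure ENNReal.ofReal_ne_top)
  refine ⟨⟨?_⟩, fun i => hint (hint₁ i), fun i => ?_, fun i j => hint (hint₂ i j),
    fun i j => ?_⟩
  · simp [← ENNReal.ofReal_add (sub_nonneg.2 hε1) hε0]
  · simp [integral_dirac_zero_mix hε0 hε1 (hint₁ i), hmean]
  · simp [integral_dirac_zero_mix hε0 hε1 (hint₂ i j), hcov]

end Covariance

lemma integral_le_add_inv_mul_integral_max_sub {α : Type*} [MeasurableSpace α] {ε : ℝ}
    {P ν : Measure α} [IsFiniteMeasure P] [IsProbabilityMeasure ν] {L : α → ℝ}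
    (hε : 0 < ε) (hνP : ENNReal.ofReal ε • ν ≤ P) (hL : Integrable L P) (β : ℝ) :
    ∫ ξ, L ξ ∂ν ≤ β + ε⁻¹ * ∫ ξ, max (L ξ - β) 0 ∂P := by
  have hLν : Integrable L ν :=
    (integrable_smul_measure (by simpa using hε) ENNReal.ofReal_ne_top).1 (hL.mono_measure hνP)
  have hpos : Integrable (fun ξ => max (L ξ - β) 0) P := (hL.sub (integrable_const β)).pos_part
  calc ∫ ξ, L ξ ∂ν = β + ∫ ξ, (L ξ - β) ∂ν := by
        rw [integral_sub hLν (integrable_const β)]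
        simp
    _ ≤ β + ∫ ξ, max (L ξ - β) 0 ∂ν :=
        add_le_add_right (integral_mono (hLν.sub (integrable_const β))
          (hLν.sub (integrable_const β)).pos_part fun ξ => le_max_left _ _) β
    _ = β + ε⁻¹ * ∫ ξ, max (L ξ - β) 0 ∂(ENNReal.ofReal ε • ν) := by
        rw [integral_smul_measure, ENNReal.toReal_ofReal hε.le, smul_eq_mul,
          inv_mul_cancel_left₀ hε.ne']
    _ ≤ β + ε⁻¹ * ∫ ξ, max (L ξ - β) 0 ∂P := by
        refine add_le_add_right (mul_le_mul_of_nonneg_left ?_ (inv_nonneg.2 hε.le)) β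
        exact integral_mono_measure hνP (.of_forall fun ξ => le_max_right _ _) hpos

section CVaR

variable {ι : Type*} [Fintype ι] {ε : ℝ} {P : Measure (EuclideanSpace ℝ ι)}
  {L : EuclideanSpace ℝ ι → ℝ}

lemma integral_le_CVaR [IsFiniteMeasure P] (hε : 0 < ε) {ν : Measure (EuclideanSpace ℝ ι)}
    [IsProbabilityMeasure ν] (hνP : ENNReal.ofReal ε • ν ≤ P) (hL : Integrable L P) :
    ∫ ξ, L ξ ∂ν ≤ CVaR ε P L :=
  le_ciInf (integral_le_add_inv_mul_integral_max_sub hε hνP hL)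

lemma CVaR_le [IsProbabilityMeasure P] (hε : ε ∈ Set.Ioc 0 1) (hL : Integrable L P) (β : ℝ) :
    CVaR ε P L ≤ β + ε⁻¹ * ∫ ξ, max (L ξ - β) 0 ∂P := by
  have hεP : ENNReal.ofReal ε • P ≤ P := fun s => by
    simpa using mul_le_of_le_one_left bot_le (ENNReal.ofReal_le_one.2 hε.2)
  exact ciInf_le
    ⟨_, Set.forall_mem_range.2 (integral_le_add_inv_mul_integral_max_sub hε.1 hεP hL)⟩ β

lemma CVaR_norm_sq_affine_le_of_mem_momentSet {κ : Type*} [Fintype κ] [DecidableEq ι]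
    {S : Matrix ι ι ℝ} {Q : Measure (EuclideanSpace ℝ ι)} (hQ : Q ∈ MomentSet S)
    (hε : ε ∈ Set.Ioc 0 1) (A : Matrix κ ι ℝ) (b : EuclideanSpace ℝ κ) (c : ℝ) :
    CVaR ε Q (fun ξ => ‖Matrix.toEuclideanLin A ξ + b‖ ^ 2 + c) ≤
      c + ε⁻¹ * (trace (S * Aᵀ * A) + ‖b‖ ^ 2) := by
  have : IsProbabilityMeasure Q := hQ.1
  have hL := (integrable_norm_sq_affine_of_mem_momentSet hQ A b).add (integrable_const c)
  refine (CVaR_le hε hL c).trans_eq ?_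
  simp [integral_norm_sq_affine_of_mem_momentSet hQ]

end CVaR

/-- lower bound on the worst-case CVaR of `‖Aξ + b‖² + c`. -/
theorem stmt2 {n m : ℕ} (ε : ℝ) (hε : ε ∈ Set.Ioo (0 : ℝ) 1)
    (S : Matrix (Fin n) (Fin n) ℝ) (hS : S.PosSemidef)
    (A : Matrix (Fin m) (Fin n) ℝ) (b : EuclideanSpace ℝ (Fin m)) (c : ℝ) :
    c + ‖b‖ ^ 2 + ε⁻¹ * Matrix.trace (S * Aᵀ * A) ≤
      wcCVaR ε S (fun ξ => ‖Matrix.toEuclideanLin A ξ + b‖ ^ 2 + c) := by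
  obtain ⟨hε0, hε1⟩ := hε
  obtain ⟨ν, hν⟩ := exists_mem_momentSet (hS.smul (inv_nonneg.2 hε0.le))
  have : IsProbabilityMeasure ν := hν.1
  have hP := dirac_zero_mix_mem_momentSet hν hε0.le hε1.le
  rw [smul_smul, mul_inv_cancel₀ hε0.ne', one_smul] at hP
  have : IsProbabilityMeasure _ := hP.1
  have hbdd : BddAbove (Set.range fun Q : MomentSet S =>
      CVaR ε Q (fun ξ => ‖Matrix.toEuclideanLin A ξ + b‖ ^ 2 + c)) :=
    ⟨_, Set.forall_mem_range.2 fun Q =>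
      CVaR_norm_sq_affine_le_of_mem_momentSet Q.2 ⟨hε0, hε1.le⟩ A b c⟩
  calc c + ‖b‖ ^ 2 + ε⁻¹ * trace (S * Aᵀ * A)
      = ∫ ξ, ‖Matrix.toEuclideanLin A ξ + b‖ ^ 2 + c ∂ν := by
        rw [integral_add (integrable_norm_sq_affine_of_mem_momentSet hν A b) (integrable_const c),
          integral_norm_sq_affine_of_mem_momentSet hν, integral_const]
        simp [Matrix.smul_mul, trace_smul]
        ring
    _ ≤ CVaR ε _ _ := integral_le_CVaR hε0 (Measure.le_add_left le_rfl)
        ((integrable_norm_sq_affine_of_mem_momentSet hP A b).add (integrable_const c))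
    _ ≤ _ := le_ciSup hbdd ⟨_, hP⟩
end

section
/- Worst-case CVaR ultimate bound (Theorem 1): consider x_{t+1} = A x_t + E w_t with spectral norm ‖A‖ < 1 and Σ_w positive semidefinite, and let P := Σ_{k=0}^∞ A^k E Σ_w Eᵀ (Aᵀ)^k. If r > 0 satisfies r² > (1/ε)·Tr(P), then the ball D = {x : ‖x‖² ≤ r²} is a worst-case CVaR ultimate bound: for every initial state x₀ ∈ ℝ^{n_x} there exists T > 0 such that for all t ≥ T, sup_{P ∈ M_t} CVaR_ε^P[ ‖A^t x₀ + H_t w̄_t‖² − r² ] ≤ 0. -/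
open MeasureTheory Matrix Kronecker

/-- The block matrix `H_t = [A^(t-1) E, A^(t-2) E, ..., E]`, viewed as a matrix acting on the
stacked disturbance vector `w̄_t = (w_0, ..., w_(t-1))` (indexed by `Fin t × Fin nw`),
so that `H_t w̄_t = Σ_k A^(t-1-k) E w_k`. -/
noncomputable def Hmat {nx nw : ℕ} (A : Matrix (Fin nx) (Fin nx) ℝ)
    (E : Matrix (Fin nx) (Fin nw) ℝ) (t : ℕ) :
    Matrix (Fin nx) (Fin t × Fin nw) ℝ :=
  Matrix.of fun i p => (A ^ (t - 1 - (p.1 : ℕ)) * E) i p.2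

/-!
Write `Q = ∑ₖ Aᵏ E Σ_w Eᵀ (Aᵀ)ᵏ`. For every `P ∈ M_t`, the zero-mean and covariance constraints
give `E_P ‖x_t‖² = ‖Aᵗ x₀‖² + tr (H_t (I_t ⊗ Σ_w) H_tᵀ)`, and this trace is the partial sum
`∑_{s<t} tr (Aˢ E Σ_w Eᵀ (Aᵀ)ˢ)` of a series of nonnegative terms with sum `tr Q`. As
`‖Aᵗ x₀‖ ≤ ‖A‖ᵗ ‖x₀‖ → 0` and `tr Q < ε r²`, eventually `E_P ‖x_t‖² ≤ ε r²` uniformly in `P`.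
Choosing `β = -r²` in the definition of CVaR then bounds the CVaR of `‖x_t‖² - r²` by
`-r² + ε⁻¹ E_P ‖x_t‖² ≤ 0`.
-/

open scoped Matrix.Norms.L2Operator

section SpectralNorm

variable {n : Type*} [Fintype n] [DecidableEq n]

lemma specNorm_eq_l2_opNorm {m : Type*} [Fintype m] (A : Matrix m n ℝ) : specNorm A = ‖A‖ := rfl

lemma l2_opNorm_pow_le (A : Matrix n n ℝ) (k : ℕ) : ‖A ^ k‖ ≤ ‖A‖ ^ k := by
  induction k with
  | zero =>
    rw [pow_zero, pow_zero, cstar_norm_def, map_one]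
    exact ContinuousLinearMap.norm_id_le
  | succ k ih =>
    rw [pow_succ, pow_succ]
    exact (l2_opNorm_mul _ _).trans (by gcongr)

lemma norm_toEuclideanLin_pow_le (A : Matrix n n ℝ) (k : ℕ) (x : EuclideanSpace ℝ n) :
    ‖toEuclideanLin (A ^ k) x‖ ≤ ‖A‖ ^ k * ‖x‖ :=
  ((LinearMap.toContinuousLinearMap (toEuclideanLin (A ^ k))).le_opNorm x).trans
    (by gcongr; exact l2_opNorm_pow_le A k)

lemma summable_pow_mul_mul_transpose_pow {A : Matrix n n ℝ} (hA : ‖A‖ < 1) (G : Matrix n n ℝ) :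
    Summable fun k => A ^ k * G * Aᵀ ^ k := by
  have hA2 : ‖A‖ ^ 2 < 1 := pow_lt_one₀ (norm_nonneg A) hA two_ne_zero
  refine Summable.of_norm_bounded
    ((summable_geometric_of_lt_one (by positivity) hA2).mul_left ‖G‖) fun k => ?_
  have hT : ‖Aᵀ ^ k‖ = ‖A ^ k‖ := by
    rw [← transpose_pow, ← conjTranspose_eq_transpose_of_trivial, l2_opNorm_conjTranspose]
  calc ‖A ^ k * G * Aᵀ ^ k‖ ≤ ‖A ^ k‖ * ‖G‖ * ‖Aᵀ ^ k‖ :=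
        (l2_opNorm_mul _ _).trans (by gcongr; exact l2_opNorm_mul _ _)
    _ ≤ ‖A‖ ^ k * ‖G‖ * ‖A‖ ^ k := by rw [hT]; gcongr <;> exact l2_opNorm_pow_le A k
    _ = ‖G‖ * (‖A‖ ^ 2) ^ k := by ring

end SpectralNorm

lemma sum_range_trace_le_trace_tsum {n : Type*} [Fintype n] {f : ℕ → Matrix n n ℝ}
    (hf : Summable f) (hf₀ : ∀ k, 0 ≤ trace (f k)) (t : ℕ) :
    ∑ s ∈ Finset.range t, trace (f s) ≤ trace (∑' k, f k) := by
  have htr := hf.hasSum.map (traceAddMonoidHom n ℝ) continuous_id.matrix_trace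
  exact htr.summable.sum_le_tsum _ (fun k _ => hf₀ k) |>.trans_eq htr.tsum_eq

section Moments

variable {ι : Type*} [Fintype ι] {S : Matrix ι ι ℝ} {P : Measure (EuclideanSpace ℝ ι)}

lemma integrable_dotProduct (hP : P ∈ MomentSet S) (v : ι → ℝ) :
    Integrable (fun w : EuclideanSpace ℝ ι => v ⬝ᵥ w) P :=
  integrable_finsetSum _ fun p _ => (hP.2.1 p).const_mul (v p)

lemma integral_dotProduct (hP : P ∈ MomentSet S) (v : ι → ℝ) :
    ∫ w : EuclideanSpace ℝ ι, v ⬝ᵥ w ∂P = 0 := by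
  simp only [dotProduct]
  rw [integral_finsetSum _ fun p _ => (hP.2.1 p).const_mul (v p)]
  simp [integral_const_mul, hP.2.2.1]

lemma dotProduct_sq (v w : ι → ℝ) : (v ⬝ᵥ w) ^ 2 = ∑ p, ∑ q, v p * v q * (w p * w q) := by
  simp only [dotProduct, sq, Finset.sum_mul_sum]
  exact Finset.sum_congr rfl fun p _ => Finset.sum_congr rfl fun q _ => by ring

lemma integrable_dotProduct_sq (hP : P ∈ MomentSet S) (v : ι → ℝ) :
    Integrable (fun w : EuclideanSpace ℝ ι => (v ⬝ᵥ w) ^ 2) P := by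
  simp only [dotProduct_sq]
  exact integrable_finsetSum _ fun p _ => integrable_finsetSum _ fun q _ =>
    (hP.2.2.2.1 p q).const_mul _

lemma integral_dotProduct_sq (hP : P ∈ MomentSet S) (v : ι → ℝ) :
    ∫ w : EuclideanSpace ℝ ι, (v ⬝ᵥ w) ^ 2 ∂P = v ⬝ᵥ S *ᵥ v := by
  simp only [dotProduct_sq]
  rw [integral_finsetSum _ fun p _ => integrable_finsetSum _ fun q _ =>
    (hP.2.2.2.1 p q).const_mul _]
  simp only [dotProduct, mulVec, Finset.mul_sum]
  refine Finset.sum_congr rfl fun p _ => ?_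
  rw [integral_finsetSum _ fun q _ => (hP.2.2.2.1 p q).const_mul _]
  refine Finset.sum_congr rfl fun q _ => ?_
  rw [integral_const_mul, hP.2.2.2.2]
  ring

lemma integrable_add_dotProduct_sq (hP : P ∈ MomentSet S) (a : ℝ) (v : ι → ℝ) :
    Integrable (fun w : EuclideanSpace ℝ ι => (a + v ⬝ᵥ w) ^ 2) P := by
  have : IsProbabilityMeasure P := hP.1
  simp only [add_sq]
  exact ((integrable_const _).add ((integrable_dotProduct hP v).const_mul _)).add
    (integrable_dotProduct_sq hP v)

lemma integral_add_dotProduct_sq (hP : P ∈ MomentSet S) (a : ℝ) (v : ι → ℝ) :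
    ∫ w : EuclideanSpace ℝ ι, (a + v ⬝ᵥ w) ^ 2 ∂P = a ^ 2 + v ⬝ᵥ S *ᵥ v := by
  have : IsProbabilityMeasure P := hP.1
  have hlin : Integrable (fun w : EuclideanSpace ℝ ι => 2 * a * (v ⬝ᵥ w)) P :=
    (integrable_dotProduct hP v).const_mul _
  have hconst_lin : Integrable (fun w : EuclideanSpace ℝ ι => a ^ 2 + 2 * a * (v ⬝ᵥ w)) P :=
    (integrable_const _).add hlin
  simp only [add_sq]
  rw [integral_add hconst_lin (integrable_dotProduct_sq hP v),
    integral_add (integrable_const _) hlin, integral_const_mul, integral_dotProduct hP,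
    integral_dotProduct_sq hP]
  simp

lemma integral_norm_add_toEuclideanLin_sq [DecidableEq ι] (hP : P ∈ MomentSet S) {m : Type*}
    [Fintype m] (M : Matrix m ι ℝ) (c : EuclideanSpace ℝ m) :
    ∫ w, ‖c + toEuclideanLin M w‖ ^ 2 ∂P = ‖c‖ ^ 2 + trace (M * S * Mᵀ) := by
  have hexp (w : EuclideanSpace ℝ ι) :
      ‖c + toEuclideanLin M w‖ ^ 2 = ∑ i, (c i + M i ⬝ᵥ w) ^ 2 := by
    simp [EuclideanSpace.norm_sq_eq, mulVec]
  simp_rw [hexp]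
  refine (integral_finsetSum _ fun i _ => integrable_add_dotProduct_sq hP _ _).trans ?_
  simp only [integral_add_dotProduct_sq hP, Finset.sum_add_distrib, EuclideanSpace.norm_sq_eq]
  congr 1
  · simp [sq_abs]
  · simp only [trace, diag, mul_apply, dotProduct, mulVec, transpose_apply, Finset.sum_mul,
      Finset.mul_sum]
    refine Finset.sum_congr rfl fun i _ => Finset.sum_comm.trans ?_
    exact Finset.sum_congr rfl fun p _ => Finset.sum_congr rfl fun q _ => by ring

end Moments

lemma CVaR_sub_const_nonpos {ι : Type*} [Fintype ι] {ε c : ℝ} {P : Measure (EuclideanSpace ℝ ι)}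
    {f : EuclideanSpace ℝ ι → ℝ} (hf : ∀ ξ, 0 ≤ f ξ) (h : ε⁻¹ * ∫ ξ, f ξ ∂P ≤ c) :
    CVaR ε P (fun ξ => f ξ - c) ≤ 0 := by
  unfold CVaR
  by_cases hbdd : BddBelow (Set.range fun β : ℝ => β + ε⁻¹ * ∫ ξ, max (f ξ - c - β) 0 ∂P)
  · refine (ciInf_le hbdd (-c)).trans ?_
    simp only [sub_neg_eq_add, sub_add_cancel, max_eq_left (hf _)]
    linarith
  · rw [Real.iInf_of_not_bddBelow hbdd]

lemma mul_one_kronecker_mul_transpose {R m n κ : Type*} [CommSemiring R] [Fintype n] [Fintype κ]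
    [DecidableEq κ] (M : Matrix m (κ × n) R) (S : Matrix n n R) :
    M * ((1 : Matrix κ κ R) ⊗ₖ S) * Mᵀ
      = ∑ k, M.submatrix id (Prod.mk k) * S * (M.submatrix id (Prod.mk k))ᵀ := by
  ext i j
  simp [mul_apply, Fintype.sum_prod_type, one_apply, ite_mul, Finset.sum_mul, Matrix.sum_apply]

section LinearSystem

variable {nx nw : ℕ} {A : Matrix (Fin nx) (Fin nx) ℝ} {E : Matrix (Fin nx) (Fin nw) ℝ}

lemma Hmat_submatrix {t : ℕ} (k : Fin t) :
    (Hmat A E t).submatrix id (Prod.mk k) = A ^ (t - 1 - (k : ℕ)) * E := rfl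

lemma trace_Hmat_mul_one_kronecker_mul_transpose (Sw : Matrix (Fin nw) (Fin nw) ℝ) (t : ℕ) :
    trace (Hmat A E t * ((1 : Matrix (Fin t) (Fin t) ℝ) ⊗ₖ Sw) * (Hmat A E t)ᵀ)
      = ∑ s ∈ Finset.range t, trace (A ^ s * (E * Sw * Eᵀ) * Aᵀ ^ s) := by
  have hblock (s : ℕ) : A ^ s * E * Sw * (A ^ s * E)ᵀ = A ^ s * (E * Sw * Eᵀ) * Aᵀ ^ s := by
    simp only [transpose_mul, transpose_pow, Matrix.mul_assoc]
  simp only [mul_one_kronecker_mul_transpose, trace_sum, Hmat_submatrix, hblock]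
  let g (s : ℕ) := trace (A ^ s * (E * Sw * Eᵀ) * Aᵀ ^ s)
  rw [Fin.sum_univ_eq_sum_range (fun k => g (t - 1 - k)), Finset.sum_range_reflect g]

lemma integral_norm_state_sq_le (hA : ‖A‖ < 1) {Sw : Matrix (Fin nw) (Fin nw) ℝ}
    (hSw : Sw.PosSemidef) (x₀ : EuclideanSpace ℝ (Fin nx)) (t : ℕ)
    {P : Measure (EuclideanSpace ℝ (Fin t × Fin nw))}
    (hP : P ∈ MomentSet ((1 : Matrix (Fin t) (Fin t) ℝ) ⊗ₖ Sw)) :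
    ∫ w, ‖toEuclideanLin (A ^ t) x₀ + toEuclideanLin (Hmat A E t) w‖ ^ 2 ∂P
      ≤ (‖A‖ ^ t * ‖x₀‖) ^ 2 + trace (∑' k : ℕ, A ^ k * (E * Sw * Eᵀ) * Aᵀ ^ k) := by
  have hterm_nonneg (k : ℕ) : 0 ≤ trace (A ^ k * (E * Sw * Eᵀ) * Aᵀ ^ k) := by
    have hG := hSw.mul_mul_conjTranspose_same E
    simpa [conjTranspose_eq_transpose_of_trivial, transpose_pow] using
      (hG.mul_mul_conjTranspose_same (A ^ k)).trace_nonneg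
  rw [integral_norm_add_toEuclideanLin_sq hP, trace_Hmat_mul_one_kronecker_mul_transpose]
  gcongr
  · exact norm_toEuclideanLin_pow_le A t x₀
  · exact sum_range_trace_le_trace_tsum (summable_pow_mul_mul_transpose_pow hA _) hterm_nonneg t

end LinearSystem

theorem stmt10_general {nx nw : ℕ} (ε : ℝ) (hε : ε ∈ Set.Ioo (0 : ℝ) 1)
    (A : Matrix (Fin nx) (Fin nx) ℝ) (E : Matrix (Fin nx) (Fin nw) ℝ)
    (Sw : Matrix (Fin nw) (Fin nw) ℝ)
    (hA : specNorm A < 1) (hSw : Sw.PosSemidef)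
    (r : ℝ)
    (hr2 : ε⁻¹ * Matrix.trace (∑' k : ℕ, A ^ k * (E * Sw * Eᵀ) * (Aᵀ) ^ k) < r ^ 2) :
    ∀ x₀ : EuclideanSpace ℝ (Fin nx), ∃ T : ℕ, 0 < T ∧ ∀ t ≥ T,
      wcCVaR ε ((1 : Matrix (Fin t) (Fin t) ℝ) ⊗ₖ Sw)
        (fun w => ‖Matrix.toEuclideanLin (A ^ t) x₀ +
          Matrix.toEuclideanLin (Hmat A E t) w‖ ^ 2 - r ^ 2) ≤ 0 := by
  intro x₀
  rw [specNorm_eq_l2_opNorm] at hA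
  set τ := trace (∑' k : ℕ, A ^ k * (E * Sw * Eᵀ) * Aᵀ ^ k)
  have hτ : τ < ε * r ^ 2 := by rwa [inv_mul_lt_iff₀ hε.1] at hr2
  have hdecay : Filter.Tendsto (fun t : ℕ => (‖A‖ ^ t * ‖x₀‖) ^ 2) Filter.atTop (nhds 0) := by
    simpa using ((tendsto_pow_atTop_nhds_zero_of_lt_one (norm_nonneg A) hA).mul_const ‖x₀‖).pow 2
  obtain ⟨T₀, hT₀⟩ := Filter.eventually_atTop.mp (hdecay.eventually_lt_const (sub_pos.mpr hτ))
  refine ⟨T₀ + 1, T₀.succ_pos, fun t ht => Real.iSup_nonpos fun P => ?_⟩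
  refine CVaR_sub_const_nonpos (fun _ => sq_nonneg _) ?_
  have hmean := integral_norm_state_sq_le (E := E) hA hSw x₀ t P.2
  rw [inv_mul_le_iff₀ hε.1]
  linarith [hT₀ t (by omega)]

/-- Theorem 1: worst-case CVaR ultimate bound for `x_{t+1} = A x_t + E w_t`. -/
theorem stmt10 {nx nw : ℕ} (ε : ℝ) (hε : ε ∈ Set.Ioo (0 : ℝ) 1)
    (A : Matrix (Fin nx) (Fin nx) ℝ) (E : Matrix (Fin nx) (Fin nw) ℝ)
    (Sw : Matrix (Fin nw) (Fin nw) ℝ)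
    (hA : specNorm A < 1) (hSw : Sw.PosSemidef)
    (r : ℝ) (hr : 0 < r)
    (hr2 : ε⁻¹ * Matrix.trace (∑' k : ℕ, A ^ k * (E * Sw * Eᵀ) * (Aᵀ) ^ k) < r ^ 2) :
    ∀ x₀ : EuclideanSpace ℝ (Fin nx), ∃ T : ℕ, 0 < T ∧ ∀ t ≥ T,
      wcCVaR ε ((1 : Matrix (Fin t) (Fin t) ℝ) ⊗ₖ Sw)
        (fun w => ‖Matrix.toEuclideanLin (A ^ t) x₀ +
          Matrix.toEuclideanLin (Hmat A E t) w‖ ^ 2 - r ^ 2) ≤ 0 :=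
  stmt10_general ε hε A E Sw hA hSw r hr2
end

section
/- Worst-case CVaR positively invariant set (Theorem 2): consider x_{t+1} = A x_t + E w_t with spectral norm ‖A‖ < 1 and Σ_w positive semidefinite. If r > 0 satisfies r² ≥ (1/(ε·(1 − ‖A‖)²))·Tr(Σ_w Eᵀ E), then the ball D = {x : ‖x‖² ≤ r²} is worst-case CVaR positively invariant: for every x ∈ ℝ^{n_x} with ‖x‖² ≤ r² and every k ≥ 1, sup_{P ∈ M_k} CVaR_ε^P[ ‖A^k x + H_k w̄_k‖² − r² ] ≤ 0. -/
open MeasureTheory Matrix Kronecker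

/-!
Write `a = ‖A‖`. The deterministic part of the state satisfies `‖A^k x‖ ≤ a^k r`. Under any
`P ∈ M_k` only second moments enter: `E‖H_k w̄‖² = tr (H_k (I ⊗ Σ_w) H_kᵀ)`, which splits over the
blocks `A^j E` into `∑_{j<k} tr (A^j (E Σ_w Eᵀ) A^jᵀ) ≤ (∑_{j<k} a^{2j}) tr (Σ_w Eᵀ E)`, and since
`∑ a^{2j} ≤ (∑ a^j)² = ((1 - a^k) / (1 - a))²` the hypothesis on `r` gives
`E‖H_k w̄‖² ≤ ε t²` with `t = (1 - a^k) r > 0`.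

It remains to see that `E‖Z‖² ≤ ε t²` and `‖c‖ + t ≤ r` force `CVaR_ε[‖c + Z‖² - r²] ≤ 0`.
Take `β = ‖c‖² + ‖c‖ t - r²`: by AM-GM, `2 ‖c‖ ‖Z‖ ≤ ‖c‖ t + (‖c‖ / t) ‖Z‖²`, so
`(‖c + Z‖² - r² - β)₊ ≤ (1 + ‖c‖ / t) ‖Z‖²` and `β + ε⁻¹ E[…]₊ ≤ (‖c‖ + t)² - r² ≤ 0`.
-/

section SpectralNorm

variable {l m n : Type*} [Fintype l] [Fintype m] [Fintype n] [DecidableEq n]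

lemma specNorm_nonneg (A : Matrix m n ℝ) : 0 ≤ specNorm A := norm_nonneg _

lemma norm_toEuclideanLin_apply_le (A : Matrix m n ℝ) (v : EuclideanSpace ℝ n) :
    ‖toEuclideanLin A v‖ ≤ specNorm A * ‖v‖ :=
  (toEuclideanLin A).toContinuousLinearMap.le_opNorm v

open scoped Matrix.Norms.L2Operator in
lemma specNorm_pow_le (A : Matrix n n ℝ) : ∀ k : ℕ, specNorm (A ^ k) ≤ specNorm A ^ k
  | 0 => by
    show ‖toEuclideanCLM (n := n) (𝕜 := ℝ) (A ^ 0)‖ ≤ _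
    rw [pow_zero, map_one, pow_zero]
    exact ContinuousLinearMap.norm_id_le
  | k + 1 => norm_pow_le' A k.succ_pos

lemma trace_mul_transpose_eq_sum_norm_sq (X : Matrix m l ℝ) :
    trace (X * Xᵀ) = ∑ j, ‖WithLp.toLp 2 (Xᵀ j)‖ ^ 2 := by
  have (j : l) := EuclideanSpace.norm_sq_eq (WithLp.toLp 2 (Xᵀ j))
  simp only [this, trace, diag, mul_apply, transpose_apply, Real.norm_eq_abs, sq_abs]
  rw [Finset.sum_comm]
  simp only [sq]

lemma trace_mul_mul_transpose_le (M : Matrix m n ℝ) (D : Matrix n l ℝ) :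
    trace (M * D * (M * D)ᵀ) ≤ specNorm M ^ 2 * trace (D * Dᵀ) := by
  have hcol : ∀ j, WithLp.toLp 2 ((M * D)ᵀ j) = toEuclideanLin M (WithLp.toLp 2 (Dᵀ j)) := by
    intro j; ext i; simp [mul_apply, mulVec, dotProduct]
  rw [trace_mul_transpose_eq_sum_norm_sq, trace_mul_transpose_eq_sum_norm_sq, Finset.mul_sum]
  refine Finset.sum_le_sum fun j _ => ?_
  rw [hcol, ← mul_pow]
  exact pow_le_pow_left₀ (norm_nonneg _) (norm_toEuclideanLin_apply_le M _) 2

open scoped MatrixOrder in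
lemma Matrix.PosSemidef.trace_mul_mul_transpose_le {N : Matrix n n ℝ} (hN : N.PosSemidef)
    (M : Matrix m n ℝ) : trace (M * N * Mᵀ) ≤ specNorm M ^ 2 * trace N := by
  obtain ⟨B, rfl⟩ := CStarAlgebra.nonneg_iff_eq_star_mul_self.mp hN.nonneg
  simpa [Matrix.mul_assoc, transpose_mul, star_eq_conjTranspose] using
    _root_.trace_mul_mul_transpose_le M Bᵀ

end SpectralNorm

lemma trace_of_mul_one_kronecker_mul_transpose {ι m n R : Type*} [Fintype ι] [DecidableEq ι]
    [Fintype m] [Fintype n] [CommSemiring R] (G : ι → Matrix m n R) (S : Matrix n n R) :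
    trace (of (fun i (p : ι × n) => G p.1 i p.2) * ((1 : Matrix ι ι R) ⊗ₖ S) *
        (of (fun i (p : ι × n) => G p.1 i p.2))ᵀ) = ∑ t, trace (G t * S * (G t)ᵀ) := by
  simp only [trace, diag, mul_apply, transpose_apply, of_apply, Fintype.sum_prod_type,
    kroneckerMap_apply, one_apply, ite_mul, one_mul, zero_mul, mul_ite, mul_zero]
  rw [Finset.sum_comm]
  refine Finset.sum_congr rfl fun t _ => Finset.sum_congr rfl fun i _ =>
    Finset.sum_congr rfl fun j _ => ?_
  rw [Finset.sum_comm]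
  simp

lemma norm_toEuclideanLin_apply_sq {m n : Type*} [Fintype m] [Fintype n] [DecidableEq n]
    (H : Matrix m n ℝ) (w : EuclideanSpace ℝ n) :
    ‖toEuclideanLin H w‖ ^ 2 = ∑ i, ∑ p, ∑ q, H i p * H i q * (w p * w q) := by
  rw [EuclideanSpace.norm_sq_eq]
  refine Finset.sum_congr rfl fun i _ => ?_
  simp only [toLpLin_apply, Real.norm_eq_abs, sq_abs]
  rw [sq, mulVec, dotProduct, Finset.sum_mul_sum]
  exact Finset.sum_congr rfl fun p _ => Finset.sum_congr rfl fun q _ => by ring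

namespace MomentSet

variable {m n : Type*} [Fintype m] [Fintype n] [DecidableEq n] {S : Matrix n n ℝ}
  {P : Measure (EuclideanSpace ℝ n)}

lemma integrable_norm_toEuclideanLin_sq (hP : P ∈ MomentSet S) (H : Matrix m n ℝ) :
    Integrable (fun w => ‖toEuclideanLin H w‖ ^ 2) P := by
  simp only [norm_toEuclideanLin_apply_sq]
  exact integrable_finsetSum _ fun i _ => integrable_finsetSum _ fun p _ =>
    integrable_finsetSum _ fun q _ => (hP.2.2.2.1 p q).const_mul _

lemma integral_norm_toEuclideanLin_sq (hP : P ∈ MomentSet S) (H : Matrix m n ℝ) :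
    ∫ w, ‖toEuclideanLin H w‖ ^ 2 ∂P = trace (H * S * Hᵀ) := by
  have hint (i : m) (p q : n) :
      Integrable (fun w : EuclideanSpace ℝ n => H i p * H i q * (w p * w q)) P :=
    (hP.2.2.2.1 p q).const_mul _
  simp only [norm_toEuclideanLin_apply_sq]
  rw [integral_finsetSum _ fun i _ => integrable_finsetSum _ fun p _ =>
    integrable_finsetSum _ fun q _ => hint i p q]
  simp only [trace, diag, mul_apply, transpose_apply, Finset.sum_mul]
  refine Finset.sum_congr rfl fun i _ => ?_
  rw [integral_finsetSum _ fun p _ => integrable_finsetSum _ fun q _ => hint i p q]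
  conv_rhs => rw [Finset.sum_comm]
  refine Finset.sum_congr rfl fun p _ => ?_
  rw [integral_finsetSum _ fun q _ => hint i p q]
  refine Finset.sum_congr rfl fun q _ => ?_
  rw [integral_const_mul, hP.2.2.2.2 p q]
  ring

end MomentSet

lemma sum_sq_pow_mul_one_sub_sq_le {a : ℝ} (ha : 0 ≤ a) (k : ℕ) :
    (∑ j ∈ Finset.range k, (a ^ j) ^ 2) * (1 - a) ^ 2 ≤ (1 - a ^ k) ^ 2 := by
  rw [← mul_neg_geom_sum, mul_pow, mul_comm]
  exact mul_le_mul_of_nonneg_left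
    (Finset.sum_sq_le_sq_sum_of_nonneg fun j _ => pow_nonneg ha j) (sq_nonneg _)

lemma trace_Hmat_mul_one_kronecker_mul_transpose_le {nx nw : ℕ}
    (A : Matrix (Fin nx) (Fin nx) ℝ) (E : Matrix (Fin nx) (Fin nw) ℝ)
    {Sw : Matrix (Fin nw) (Fin nw) ℝ} (hSw : Sw.PosSemidef) (k : ℕ) :
    trace (Hmat A E k * ((1 : Matrix (Fin k) (Fin k) ℝ) ⊗ₖ Sw) * (Hmat A E k)ᵀ) *
        (1 - specNorm A) ^ 2 ≤ (1 - specNorm A ^ k) ^ 2 * trace (E * Sw * Eᵀ) := by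
  set a := specNorm A
  have hN := hSw.mul_mul_conjTranspose_same E
  rw [conjTranspose_eq_transpose_of_trivial] at hN
  have hblocks : trace (Hmat A E k * ((1 : Matrix (Fin k) (Fin k) ℝ) ⊗ₖ Sw) * (Hmat A E k)ᵀ) =
      ∑ t : Fin k, trace (A ^ (k - 1 - t) * (E * Sw * Eᵀ) * (A ^ (k - 1 - t))ᵀ) := by
    rw [Hmat, trace_of_mul_one_kronecker_mul_transpose (fun t : Fin k => A ^ (k - 1 - t) * E)]
    simp only [transpose_mul, Matrix.mul_assoc]
  have hpow : ∑ t : Fin k, (a ^ (k - 1 - t)) ^ 2 = ∑ j ∈ Finset.range k, (a ^ j) ^ 2 := by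
    rw [Fin.sum_univ_eq_sum_range (fun j => (a ^ (k - 1 - j)) ^ 2),
      Finset.sum_range_reflect (fun j => (a ^ j) ^ 2)]
  calc _ ≤ (∑ t : Fin k, (a ^ (k - 1 - t)) ^ 2 * trace (E * Sw * Eᵀ)) * (1 - a) ^ 2 := by
        rw [hblocks]
        gcongr with t
        refine (hN.trace_mul_mul_transpose_le _).trans ?_
        gcongr
        · exact hN.trace_nonneg
        · exact specNorm_nonneg _
        · exact specNorm_pow_le A _
    _ = (∑ j ∈ Finset.range k, (a ^ j) ^ 2) * (1 - a) ^ 2 * trace (E * Sw * Eᵀ) := by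
        rw [← Finset.sum_mul, hpow]
        ring
    _ ≤ (1 - a ^ k) ^ 2 * trace (E * Sw * Eᵀ) := by
        gcongr
        · exact hN.trace_nonneg
        · exact sum_sq_pow_mul_one_sub_sq_le (specNorm_nonneg A) k

-- Also covers the case where the infimum defining `CVaR` is unbounded below and `⨅` returns `0`.
lemma CVaR_nonpos_of_le {ι : Type*} [Fintype ι] {ε : ℝ} {P : Measure (EuclideanSpace ℝ ι)}
    {L : EuclideanSpace ℝ ι → ℝ} (β : ℝ) (h : β + ε⁻¹ * ∫ ξ, max (L ξ - β) 0 ∂P ≤ 0) :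
    CVaR ε P L ≤ 0 := by
  by_cases hb : BddBelow (Set.range fun β : ℝ => β + ε⁻¹ * ∫ ξ, max (L ξ - β) 0 ∂P)
  · exact (ciInf_le hb β).trans h
  · exact (Real.iInf_of_not_bddBelow hb).le

lemma CVaR_norm_add_sq_sub_sq_nonpos {ι F : Type*} [Fintype ι] [NormedAddCommGroup F]
    {ε t r : ℝ} (hε : 0 < ε) (ht : 0 < t) {P : Measure (EuclideanSpace ℝ ι)} (c : F)
    {f : EuclideanSpace ℝ ι → F} (hf : Integrable (fun w => ‖f w‖ ^ 2) P)
    (hf2 : ∫ w, ‖f w‖ ^ 2 ∂P ≤ ε * t ^ 2) (hr : ‖c‖ + t ≤ r) :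
    CVaR ε P (fun w => ‖c + f w‖ ^ 2 - r ^ 2) ≤ 0 := by
  set m := ‖c‖
  have hm : 0 ≤ m := norm_nonneg c
  have hexcess (w) : max (‖c + f w‖ ^ 2 - r ^ 2 - (m ^ 2 + m * t - r ^ 2)) 0 ≤
      (1 + m / t) * ‖f w‖ ^ 2 := by
    refine max_le ?_ (by positivity)
    have hz := norm_nonneg (f w)
    have hamgm : 0 ≤ m / t * (‖f w‖ - t) ^ 2 := by positivity
    have htri := norm_add_le c (f w)
    have hsq : ‖c + f w‖ ^ 2 ≤ (m + ‖f w‖) ^ 2 := pow_le_pow_left₀ (norm_nonneg _) htri 2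
    field_simp at hamgm ⊢
    nlinarith
  apply CVaR_nonpos_of_le (m ^ 2 + m * t - r ^ 2)
  have hint : ∫ w, max (‖c + f w‖ ^ 2 - r ^ 2 - (m ^ 2 + m * t - r ^ 2)) 0 ∂P ≤
      (1 + m / t) * (ε * t ^ 2) := by
    refine (integral_mono_of_nonneg (.of_forall fun w => le_max_right _ _) (hf.const_mul _)
      (.of_forall hexcess)).trans ?_
    rw [integral_const_mul]
    gcongr
  calc _ ≤ m ^ 2 + m * t - r ^ 2 + ε⁻¹ * ((1 + m / t) * (ε * t ^ 2)) := by gcongr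
    _ = (m + t) ^ 2 - r ^ 2 := by field_simp; ring
    _ ≤ 0 := by nlinarith

/-- Theorem 2: worst-case CVaR positively invariant set for
`x_{t+1} = A x_t + E w_t`. -/
theorem stmt12 {nx nw : ℕ} (ε : ℝ) (hε : ε ∈ Set.Ioo (0 : ℝ) 1)
    (A : Matrix (Fin nx) (Fin nx) ℝ) (E : Matrix (Fin nx) (Fin nw) ℝ)
    (Sw : Matrix (Fin nw) (Fin nw) ℝ)
    (hA : specNorm A < 1) (hSw : Sw.PosSemidef)
    (r : ℝ) (hr : 0 < r)
    (hr2 : (ε * (1 - specNorm A) ^ 2)⁻¹ * Matrix.trace (Sw * Eᵀ * E) ≤ r ^ 2) :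
    ∀ x : EuclideanSpace ℝ (Fin nx), ‖x‖ ^ 2 ≤ r ^ 2 → ∀ k : ℕ, 1 ≤ k →
      wcCVaR ε ((1 : Matrix (Fin k) (Fin k) ℝ) ⊗ₖ Sw)
        (fun w => ‖Matrix.toEuclideanLin (A ^ k) x +
          Matrix.toEuclideanLin (Hmat A E k) w‖ ^ 2 - r ^ 2) ≤ 0 := by
  intro x hx k hk
  set a := specNorm A
  have ha : 0 ≤ a := specNorm_nonneg A
  have h1a : 0 < (1 - a) ^ 2 := pow_pos (sub_pos.2 hA) 2
  have hak : a ^ k < 1 := pow_lt_one₀ ha hA (by omega)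
  have hx' : ‖x‖ ≤ r := (pow_le_pow_iff_left₀ (norm_nonneg x) hr.le two_ne_zero).mp hx
  have hmean : ‖toEuclideanLin (A ^ k) x‖ ≤ a ^ k * r :=
    (norm_toEuclideanLin_apply_le _ x).trans
      (mul_le_mul (specNorm_pow_le A k) hx' (norm_nonneg x) (by positivity))
  rw [trace_mul_cycle, inv_mul_le_iff₀ (mul_pos hε.1 h1a)] at hr2
  have hcov : trace (Hmat A E k * ((1 : Matrix (Fin k) (Fin k) ℝ) ⊗ₖ Sw) * (Hmat A E k)ᵀ) ≤
      ε * ((1 - a ^ k) * r) ^ 2 := by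
    refine le_of_mul_le_mul_right ?_ h1a
    calc _ ≤ (1 - a ^ k) ^ 2 * trace (E * Sw * Eᵀ) :=
          trace_Hmat_mul_one_kronecker_mul_transpose_le A E hSw k
      _ ≤ (1 - a ^ k) ^ 2 * (ε * (1 - a) ^ 2 * r ^ 2) := by gcongr
      _ = ε * ((1 - a ^ k) * r) ^ 2 * (1 - a) ^ 2 := by ring
  rw [wcCVaR]
  refine Real.iSup_nonpos fun P => CVaR_norm_add_sq_sub_sq_nonpos (t := (1 - a ^ k) * r) hε.1
    (mul_pos (sub_pos.2 hak) hr) _ (MomentSet.integrable_norm_toEuclideanLin_sq P.2 _) ?_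
    (by linarith)
  rwa [MomentSet.integral_norm_toEuclideanLin_sq P.2]
end
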